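/- arXiv:1704.00672 — 2 statements merged into one kernel-verified Lean document; each statement's English description precedes it below -/
import Mathlib

section
/- Let R be a henselian discrete valuation ring whose fraction field K has characteristic 0, with uniformizer t, and let q ≥ 1 be an integer. If I is a radical, t-saturated ideal of the polynomial ring R[X_1,…,X_n], then the extended ideal I·R_q[X_1,…,X_n] is a radical ideal of R_q[X_1,…,X_n]. -/
/-!
Base change along `R → R_q` identifies `R_q[X]/I·R_q[X]` with `A[T]/(T^q - t)`, where
`A = R[X]/I`, so it suffices that the latter ring is reduced. `A` is reduced and `t` is a
nonzerodivisor on it (saturation). Over the residue field of a prime `P ∌ t` of `A`, the number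
`q` is nonzero, because in `R` (of characteristic zero) `q` is a unit times a power of `t`; so
`T^q - t` is separable there, and a nilpotent class, represented by a polynomial of degree `< q`,
has all its coefficients in `P`. Hence `t` times each coefficient lies in every prime, is
nilpotent, so vanishes, and the coefficient vanishes since `t` is a nonzerodivisor.
-/

/-- An ideal `I` of `A[X₁,…,Xₙ]` is `π`-saturated if `π·f ∈ I` implies `f ∈ I`. -/
def PiSaturated {A : Type} [CommRing A] (π : A) {n : ℕ}
    (I : Ideal (MvPolynomial (Fin n) A)) : Prop :=
  ∀ f : MvPolynomial (Fin n) A, MvPolynomial.C π * f ∈ I → f ∈ I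

open Polynomial

section XPowSubC

variable {A : Type*} [CommRing A] {q : ℕ} {a : A}

theorem isReduced_adjoinRoot_X_pow_sub_C_of_field {F : Type*} [Field F] {c : F}
    (hq : (q : F) ≠ 0) (hc : c ≠ 0) : IsReduced (AdjoinRoot (X ^ q - C c)) :=
  (Ideal.isRadical_iff_quotient_reduced _).mp
    (isRadical_iff_span_singleton.mp (separable_X_pow_sub_C c hq hc).squarefree.isRadical)

theorem AdjoinRoot.map_mk {B : Type*} [CommRing B] (f : A →+* B) (p : A[X]) (p' : B[X]) (h)
    (g : A[X]) : AdjoinRoot.map f p p' h (AdjoinRoot.mk p g) = AdjoinRoot.mk p' (g.map f) := by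
  rw [AdjoinRoot.map, AdjoinRoot.lift_mk, ← AdjoinRoot.aeval_eq, aeval_def, eval₂_map,
    AdjoinRoot.algebraMap_eq]

theorem map_eq_zero_of_isNilpotent_mk_X_pow_sub_C {F : Type*} [Field F] (π : A →+* F)
    (hq : (q : F) ≠ 0) (ha : π a ≠ 0) {g : A[X]} (hg : g.degree < q)
    (hnil : IsNilpotent (AdjoinRoot.mk (X ^ q - C a) g)) : g.map π = 0 := by
  have := isReduced_adjoinRoot_X_pow_sub_C_of_field hq ha
  have hdvd : X ^ q - C (π a) ∣ (X ^ q - C a).map π := by simp [Polynomial.map_sub]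
  have h0 : AdjoinRoot.mk (X ^ q - C (π a)) (g.map π) = 0 := by
    rw [← AdjoinRoot.map_mk π _ _ hdvd]
    exact (hnil.map _).eq_zero
  refine eq_zero_of_dvd_of_degree_lt (AdjoinRoot.mk_eq_zero.mp h0) ?_
  rw [degree_X_pow_sub_C (Nat.pos_of_ne_zero (by rintro rfl; simp at hq))]
  exact degree_map_le.trans_lt hg

theorem AdjoinRoot.exists_degree_lt_and_mk_eq [Nontrivial A] {p : A[X]} (hp : p.Monic)
    (z : AdjoinRoot p) :
    ∃ g : A[X], g.degree < p.degree ∧ AdjoinRoot.mk p g = z := by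
  obtain ⟨g, rfl⟩ := AdjoinRoot.mk_surjective z
  refine ⟨g %ₘ p, degree_modByMonic_lt g hp, ?_⟩
  rw [← AdjoinRoot.modByMonicHom_mk hp]
  exact AdjoinRoot.mk_leftInverse hp _

theorem isReduced_adjoinRoot_X_pow_sub_C [IsReduced A] (hq : q ≠ 0) (ha : a ∈ nonZeroDivisors A)
    (hqa : ∃ k, (q : A) ∣ a ^ k) : IsReduced (AdjoinRoot (X ^ q - C a)) := by
  rcases subsingleton_or_nontrivial A with hA | hA
  · have : Subsingleton (AdjoinRoot (X ^ q - C a)) := AdjoinRoot.mk_surjective.subsingleton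
    infer_instance
  refine ⟨fun z hz => ?_⟩
  obtain ⟨g, hg, rfl⟩ := AdjoinRoot.exists_degree_lt_and_mk_eq (monic_X_pow_sub_C a hq) z
  replace hg : g.degree < q :=
    hg.trans_le (degree_le_natDegree.trans_eq (congrArg _ natDegree_X_pow_sub_C))
  suffices g = 0 by rw [this, map_zero]
  ext i
  have hnil : IsNilpotent (a * g.coeff i) := by
    refine nilpotent_iff_mem_prime.mpr fun P hP => ?_
    by_cases haP : a ∈ P
    · exact P.mul_mem_right _ haP
    have hqP : (q : A) ∉ P := by
      obtain ⟨k, hk⟩ := hqa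
      exact fun hqP => haP (hP.mem_of_pow_mem k (P.mem_of_dvd hk hqP))
    have hmap := map_eq_zero_of_isNilpotent_mk_X_pow_sub_C (algebraMap A P.ResidueField)
      (by rwa [← map_natCast (algebraMap A _), Ne, Ideal.algebraMap_residueField_eq_zero])
      (by rwa [Ne, Ideal.algebraMap_residueField_eq_zero]) hg hz
    refine P.mul_mem_left _ (Ideal.algebraMap_residueField_eq_zero.mp ?_)
    rw [← coeff_map, hmap, coeff_zero]
  exact mem_nonZeroDivisors_iff_left.mp ha _ hnil.eq_zero

end XPowSubC

namespace MvPolynomial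

variable {R σ : Type*} [CommRing R] (p : R[X]) (I : Ideal (MvPolynomial σ R))

noncomputable def toAdjoinRootQuotient :
    MvPolynomial σ (AdjoinRoot p) →+*
      AdjoinRoot (p.map (algebraMap R (MvPolynomial σ R ⧸ I))) :=
  eval₂Hom (AdjoinRoot.map _ p _ dvd_rfl) fun i => AdjoinRoot.of _ (Ideal.Quotient.mk I (X i))

theorem toAdjoinRootQuotient_comp_map :
    (toAdjoinRootQuotient p I).comp (map (algebraMap R (AdjoinRoot p))) =
      (AdjoinRoot.of _).comp (Ideal.Quotient.mk I) := by
  ext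
  · simp [toAdjoinRootQuotient, AdjoinRoot.algebraMap_eq]
    rfl
  · simp [toAdjoinRootQuotient]

noncomputable def ofAdjoinRootQuotient :
    AdjoinRoot (p.map (algebraMap R (MvPolynomial σ R ⧸ I))) →+*
      MvPolynomial σ (AdjoinRoot p) ⧸ I.map (map (algebraMap R (AdjoinRoot p))) :=
  AdjoinRoot.lift (Ideal.quotientMap _ _ Ideal.le_comap_map)
    (Ideal.Quotient.mk _ (C (AdjoinRoot.root p))) (by
      have : (Ideal.quotientMap _ _ Ideal.le_comap_map).comp
            (algebraMap R (MvPolynomial σ R ⧸ I)) =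
          (Ideal.Quotient.mk (I.map (map (algebraMap R (AdjoinRoot p))))).comp
            (C.comp (AdjoinRoot.of p)) := by
        ext
        rw [RingHom.comp_apply, ← Ideal.Quotient.mk_algebraMap, Ideal.quotientMap_mk,
          MvPolynomial.algebraMap_eq, map_C]
        rfl
      rw [Polynomial.eval₂_map, this, ← Polynomial.hom_eval₂, ← Polynomial.hom_eval₂,
        AdjoinRoot.eval₂_root, map_zero, map_zero])

theorem ofAdjoinRootQuotient_comp_toAdjoinRootQuotient :
    (ofAdjoinRootQuotient p I).comp (toAdjoinRootQuotient p I) = Ideal.Quotient.mk _ := by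
  have hmap : ((ofAdjoinRootQuotient p I).comp (toAdjoinRootQuotient p I)).comp
        (map (algebraMap R (AdjoinRoot p))) =
      (Ideal.Quotient.mk _).comp (map (algebraMap R (AdjoinRoot p))) := by
    rw [RingHom.comp_assoc, toAdjoinRootQuotient_comp_map, ← RingHom.comp_assoc,
      ofAdjoinRootQuotient, AdjoinRoot.lift_comp_of, Ideal.quotientMap_comp_mk]
  refine ringHom_ext' (AdjoinRoot.ringHom_ext (RingHom.ext fun r => ?_) ?_) fun i => ?_
  · simpa only [RingHom.comp_apply, map_C, ← AdjoinRoot.algebraMap_eq] using congr($hmap (C r))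
  · simp only [RingHom.comp_apply, toAdjoinRootQuotient, eval₂Hom_C, AdjoinRoot.map_root,
      ofAdjoinRootQuotient, AdjoinRoot.lift_root]
  · simpa only [RingHom.comp_apply, map_X] using congr($hmap (X i))

theorem ker_toAdjoinRootQuotient :
    RingHom.ker (toAdjoinRootQuotient p I) = I.map (map (algebraMap R (AdjoinRoot p))) := by
  refine le_antisymm (fun f hf => ?_) (Ideal.map_le_iff_le_comap.mpr fun f hf => ?_)
  · rw [← Ideal.Quotient.eq_zero_iff_mem, ← ofAdjoinRootQuotient_comp_toAdjoinRootQuotient,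
      RingHom.comp_apply, RingHom.mem_ker.mp hf, map_zero]
  · rw [Ideal.mem_comap, RingHom.mem_ker, ← RingHom.comp_apply, toAdjoinRootQuotient_comp_map,
      RingHom.comp_apply, Ideal.Quotient.eq_zero_iff_mem.mpr hf, map_zero]

theorem isRadical_map_algebraMap_adjoinRoot
    [IsReduced (AdjoinRoot (p.map (algebraMap R (MvPolynomial σ R ⧸ I))))] :
    (I.map (map (algebraMap R (AdjoinRoot p)))).IsRadical := by
  rw [← ker_toAdjoinRootQuotient]
  rintro f ⟨n, hf⟩
  exact (IsNilpotent.eq_zero ⟨n, by rwa [← map_pow]⟩ : toAdjoinRootQuotient p I f = 0)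

end MvPolynomial

theorem PiSaturated.algebraMap_mem_nonZeroDivisors {A : Type} [CommRing A] {π : A} {n : ℕ}
    {I : Ideal (MvPolynomial (Fin n) A)} (hsat : PiSaturated π I) :
    algebraMap A (MvPolynomial (Fin n) A ⧸ I) π ∈ nonZeroDivisors _ := by
  refine mem_nonZeroDivisors_iff_left.mpr fun x hx => ?_
  obtain ⟨f, rfl⟩ := Ideal.Quotient.mk_surjective x
  rw [← Ideal.Quotient.mk_algebraMap, MvPolynomial.algebraMap_eq, ← map_mul,
    Ideal.Quotient.eq_zero_iff_mem] at hx
  exact Ideal.Quotient.eq_zero_iff_mem.mpr (hsat f hx)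

theorem extended_ideal_radical_general
    (R : Type) [CommRing R] [IsDomain R] [IsDiscreteValuationRing R]
    [CharZero (FractionRing R)]
    (t : R) (ht : Irreducible t) (q : ℕ) (hq : 1 ≤ q) (n : ℕ)
    (I : Ideal (MvPolynomial (Fin n) R)) (hrad : I.IsRadical) (hsat : PiSaturated t I) :
    (I.map (MvPolynomial.map
      (algebraMap R (AdjoinRoot (Polynomial.X ^ q - Polynomial.C t))))).IsRadical := by
  have := (algebraMap R (FractionRing R)).charZero
  obtain ⟨k, u, hu⟩ := IsDiscreteValuationRing.eq_unit_mul_pow_irreducible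
    (Nat.cast_ne_zero.mpr (by omega) : (q : R) ≠ 0) ht
  have hqt : (q : R) ∣ t ^ k := hu ▸ Units.mul_left_dvd.mpr dvd_rfl
  have := (Ideal.isRadical_iff_quotient_reduced I).mp hrad
  let A := MvPolynomial (Fin n) R ⧸ I
  have : IsReduced (AdjoinRoot ((X ^ q - C t).map (algebraMap R A))) := by
    rw [Polynomial.map_sub, Polynomial.map_pow, map_X, map_C]
    refine isReduced_adjoinRoot_X_pow_sub_C (by omega)
      hsat.algebraMap_mem_nonZeroDivisors ⟨k, ?_⟩
    simpa only [map_natCast, map_pow] using map_dvd (algebraMap R A) hqt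
  exact MvPolynomial.isRadical_map_algebraMap_adjoinRoot _ I

/-- Let `R` be a henselian discrete valuation ring whose fraction field has characteristic
zero, `t` a uniformizer of `R` and `q ≥ 1`.  If `I` is a radical, `t`-saturated ideal of
`R[X₁,…,Xₙ]`, then the extension of `I` to `R_q[X₁,…,Xₙ]`, where `R_q = R[T]/(T^q - t)`,
is a radical ideal. -/
theorem extended_ideal_radical
    (R : Type) [CommRing R] [IsDomain R] [IsDiscreteValuationRing R] [HenselianLocalRing R]
    [CharZero (FractionRing R)]
    (t : R) (ht : Irreducible t) (q : ℕ) (hq : 1 ≤ q) (n : ℕ)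
    (I : Ideal (MvPolynomial (Fin n) R)) (hrad : I.IsRadical) (hsat : PiSaturated t I) :
    (I.map (MvPolynomial.map
      (algebraMap R (AdjoinRoot (Polynomial.X ^ q - Polynomial.C t))))).IsRadical :=
  extended_ideal_radical_general R t ht q hq n I hrad hsat
end

section
/- Let k be an algebraically closed field of characteristic 0, let m ≥ 0 be an integer, and let K = k((t_1))…((t_m)) be the m-fold iterated formal Laurent series field over k. Let d be a prime number and let f ∈ K[X] be a monic irreducible polynomial of degree d whose coefficient of X^{d-1} is zero (equivalently, f^{(d-1)}(0) = 0). Then f(0) is not a d-th power in K^×. -/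
/-- Auxiliary construction: the pair (`k((t₁))…((t_m))`, its field structure). -/
noncomputable def IterLaurentAux (k : Type) (fk : Field k) : ℕ → Σ T : Type, Field T
  | 0 => ⟨k, fk⟩
  | m + 1 =>
    letI := (IterLaurentAux k fk m).2
    ⟨LaurentSeries (IterLaurentAux k fk m).1,
      inferInstanceAs (Field (LaurentSeries (IterLaurentAux k fk m).1))⟩

/-- The iterated Laurent series field `k((t₁))…((t_m))`. -/
noncomputable def IterLaurent (k : Type) [fk : Field k] (m : ℕ) : Type :=
  (IterLaurentAux k fk m).1

noncomputable instance (k : Type) [fk : Field k] (m : ℕ) : Field (IterLaurent k m) :=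
  (IterLaurentAux k fk m).2


/-!
Induction on `m`. Over the algebraically closed `k` irreducible polynomials are linear, while
`d > 1`. For `K = F((t))`, write `f(0) = y ^ d` and rescale the roots by `y⁻¹`, so that
`f(0) = 1`. Hensel's lemma over `F⟦t⟧` then shows that the coefficients of `f` are integral and
that its reduction `f̄ ∈ F[X]` is a power `q ^ e` of a monic irreducible `q`. As `e * deg q = d`
is prime, either `f̄` is irreducible of degree `d` with vanishing `X ^ (d - 1)`-coefficient and
`f̄(0) = 1 ^ d`, which is excluded over `F` by induction, or `f̄ = (X + c) ^ d`, where the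
vanishing `X ^ (d - 1)`-coefficient `d * c` forces `c = 0` in characteristic `0`, contradicting
`f̄(0) = 1`.
-/

open Polynomial Finset

namespace Polynomial

variable {R : Type*} [CommRing R]

noncomputable def swapPowerSeries : (PowerSeries R)[X] →+* PowerSeries R[X] :=
  eval₂RingHom (PowerSeries.map C) (PowerSeries.C X)

theorem coeff_coeff_swapPowerSeries (P : (PowerSeries R)[X]) (n j : ℕ) :
    (PowerSeries.coeff n (swapPowerSeries P)).coeff j = PowerSeries.coeff n (P.coeff j) := by
  induction P using Polynomial.induction_on' with
  | add P Q hP hQ => simp [hP, hQ]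
  | monomial k c =>
    simp only [swapPowerSeries, coe_eval₂RingHom, eval₂_monomial, ← map_pow,
      PowerSeries.coeff_mul_C, PowerSeries.coeff_map, coeff_C_mul_X_pow, coeff_monomial]
    split_ifs <;> simp_all

theorem swapPowerSeries_injective : Function.Injective (swapPowerSeries (R := R)) := by
  intro P Q h
  ext j n
  rw [← coeff_coeff_swapPowerSeries, h, coeff_coeff_swapPowerSeries]

theorem constantCoeff_swapPowerSeries (P : (PowerSeries R)[X]) :
    PowerSeries.constantCoeff (swapPowerSeries P) = P.map PowerSeries.constantCoeff := by
  ext j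
  rw [← PowerSeries.coeff_zero_eq_constantCoeff_apply, coeff_coeff_swapPowerSeries, coeff_map,
    PowerSeries.coeff_zero_eq_constantCoeff_apply]

theorem natDegree_coeff_swapPowerSeries_le (P : (PowerSeries R)[X]) (n : ℕ) :
    (PowerSeries.coeff n (swapPowerSeries P)).natDegree ≤ P.natDegree :=
  natDegree_le_iff_coeff_eq_zero.mpr fun j hj => by
    rw [coeff_coeff_swapPowerSeries, coeff_eq_zero_of_natDegree_lt hj, map_zero]

theorem exists_swapPowerSeries_eq (G : PowerSeries R[X]) {N : ℕ}
    (hG : ∀ n, (PowerSeries.coeff n G).natDegree ≤ N) :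
    ∃ P : (PowerSeries R)[X], swapPowerSeries P = G ∧ P.natDegree ≤ N := by
  set P := ∑ j ∈ range (N + 1),
    monomial j (PowerSeries.mk fun n => (PowerSeries.coeff n G).coeff j)
  have hP : ∀ j, P.coeff j = PowerSeries.mk fun n => (PowerSeries.coeff n G).coeff j := by
    intro j
    simp only [P, finsetSum_coeff, coeff_monomial, Finset.sum_ite_eq', mem_range]
    split_ifs with hj
    · rfl
    · ext n
      rw [map_zero, PowerSeries.coeff_mk,
        coeff_eq_zero_of_natDegree_lt ((hG n).trans_lt (by omega))]
  refine ⟨P, ?_, natDegree_le_iff_coeff_eq_zero.mpr fun j hj => ?_⟩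
  · ext n j
    rw [coeff_coeff_swapPowerSeries, hP, PowerSeries.coeff_mk]
  · ext n
    simp [hP, coeff_eq_zero_of_natDegree_lt ((hG n).trans_lt hj)]


section HenselLifting

variable (g₀ h₀ b : R[X]) (F : ℕ → R[X])

noncomputable def bezoutSolve (E : R[X]) : R[X] × R[X] :=
  ((b * E) %ₘ g₀, (E - (b * E) %ₘ g₀ * h₀) /ₘ g₀)

theorem bezoutSolve_spec {a : R[X]} (hg : g₀.Monic) (hab : a * g₀ + b * h₀ = 1) (E : R[X]) :
    (bezoutSolve g₀ h₀ b E).1 * h₀ + (bezoutSolve g₀ h₀ b E).2 * g₀ = E := by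
  obtain ⟨c, hc⟩ : g₀ ∣ E - (b * E) %ₘ g₀ * h₀ :=
    ⟨a * E + (b * E /ₘ g₀) * h₀, by
      linear_combination (-E) * hab - h₀ * modByMonic_add_div (b * E) g₀⟩
  simp only [bezoutSolve]
  rw [hc, mul_divByMonic_cancel_left c hg]
  linear_combination -hc

theorem natDegree_bezoutSolve_snd_le (hg : g₀.Monic) {N : ℕ} (hh : h₀.natDegree ≤ N)
    {E : R[X]} (hE : E.natDegree ≤ g₀.natDegree + N) :
    (bezoutSolve g₀ h₀ b E).2.natDegree ≤ N := by
  have hnum : (E - (b * E) %ₘ g₀ * h₀).natDegree ≤ g₀.natDegree + N :=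
    (natDegree_sub_le _ _).trans
      (max_le hE (natDegree_mul_le_of_le (natDegree_modByMonic_le _ hg) hh))
  rw [bezoutSolve, natDegree_divByMonic _ hg]
  omega

/-- The `tⁿ`-coefficients `(uₙ, vₙ)` of the Hensel factors of `∑ Fₙ tⁿ`: `(u₀, v₀) = (g₀, h₀)`,
and `(uₙ₊₁, vₙ₊₁)` solves `u h₀ + v g₀ = Fₙ₊₁ - ∑_{0 < i ≤ n} uᵢ vₙ₊₁₋ᵢ` with
`deg u < deg g₀`. -/
noncomputable def henselSeq : ℕ → R[X] × R[X]
  | 0 => (g₀, h₀)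
  | n + 1 => bezoutSolve g₀ h₀ b <| F (n + 1) -
      ∑ i ∈ (range n).attach, (henselSeq (i.1 + 1)).1 * (henselSeq (n - i.1)).2
decreasing_by
  · have := mem_range.mp i.2; omega
  · omega

theorem henselSeq_zero : henselSeq g₀ h₀ b F 0 = (g₀, h₀) := by
  rw [henselSeq]

theorem henselSeq_succ (n : ℕ) :
    henselSeq g₀ h₀ b F (n + 1) = bezoutSolve g₀ h₀ b (F (n + 1) - ∑ i ∈ range n,
      (henselSeq g₀ h₀ b F (i + 1)).1 * (henselSeq g₀ h₀ b F (n - i)).2) := by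
  rw [henselSeq, sum_attach (range n)
    fun i => (henselSeq g₀ h₀ b F (i + 1)).1 * (henselSeq g₀ h₀ b F (n - i)).2]

theorem sum_antidiagonal_henselSeq {a : R[X]} (hg : g₀.Monic) (hab : a * g₀ + b * h₀ = 1)
    (hF : F 0 = g₀ * h₀) (n : ℕ) :
    ∑ p ∈ antidiagonal n, (henselSeq g₀ h₀ b F p.1).1 * (henselSeq g₀ h₀ b F p.2).2 =
      F n := by
  rw [Nat.sum_antidiagonal_eq_sum_range_succ
    fun i j => (henselSeq g₀ h₀ b F i).1 * (henselSeq g₀ h₀ b F j).2]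
  cases n with
  | zero => simp [henselSeq_zero, hF]
  | succ n =>
    rw [sum_range_succ', sum_range_succ]
    simp only [Nat.sub_zero, Nat.succ_sub_succ, Nat.sub_self, henselSeq_zero]
    have := bezoutSolve_spec g₀ h₀ b hg hab (F (n + 1) -
      ∑ i ∈ range n, (henselSeq g₀ h₀ b F (i + 1)).1 * (henselSeq g₀ h₀ b F (n - i)).2)
    rw [← henselSeq_succ] at this
    linear_combination this

theorem natDegree_henselSeq_fst_le (hg : g₀.Monic) (n : ℕ) :
    (henselSeq g₀ h₀ b F n).1.natDegree ≤ g₀.natDegree := by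
  cases n with
  | zero => rw [henselSeq_zero]
  | succ n => rw [henselSeq_succ]; exact natDegree_modByMonic_le _ hg

theorem coeff_henselSeq_fst_natDegree (hg : g₀.Monic) (n : ℕ) :
    (henselSeq g₀ h₀ b F n).1.coeff g₀.natDegree = if n = 0 then 1 else 0 := by
  nontriviality R
  cases n with
  | zero => rw [henselSeq_zero]; exact hg.coeff_natDegree
  | succ n =>
    rw [henselSeq_succ, if_neg n.succ_ne_zero]
    exact coeff_eq_zero_of_degree_lt
      ((degree_modByMonic_lt _ hg).trans_eq (degree_eq_natDegree hg.ne_zero))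

theorem natDegree_henselSeq_snd_le (hg : g₀.Monic) {N : ℕ} (hh : h₀.natDegree ≤ N)
    (hF : ∀ n, (F n).natDegree ≤ g₀.natDegree + N) (n : ℕ) :
    (henselSeq g₀ h₀ b F n).2.natDegree ≤ N := by
  induction n using Nat.strong_induction_on with
  | _ n ih =>
    cases n with
    | zero => rwa [henselSeq_zero]
    | succ n =>
      rw [henselSeq_succ]
      refine natDegree_bezoutSolve_snd_le g₀ h₀ b hg hh
        ((natDegree_sub_le _ _).trans (max_le (hF _) ?_))
      refine natDegree_sum_le_of_forall_le _ _ fun i hi => ?_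
      exact natDegree_mul_le_of_le (natDegree_henselSeq_fst_le g₀ h₀ b F hg _)
        (ih _ (by have := mem_range.mp hi; omega))

end HenselLifting

theorem exists_monic_factor_of_map_constantCoeff_eq_mul (f : (PowerSeries R)[X]) {g₀ h₀ : R[X]}
    (hg : g₀.Monic) (hcop : IsCoprime g₀ h₀)
    (hf : f.map PowerSeries.constantCoeff = g₀ * h₀) :
    ∃ g h : (PowerSeries R)[X],
      f = g * h ∧ g.Monic ∧ g.map PowerSeries.constantCoeff = g₀ := by
  obtain ⟨a, b, hab⟩ := hcop
  set F := fun n => PowerSeries.coeff n (swapPowerSeries f)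
  set S := henselSeq g₀ h₀ b F
  obtain ⟨g, hgS, hgdeg⟩ := exists_swapPowerSeries_eq (PowerSeries.mk fun n => (S n).1)
    (N := g₀.natDegree) fun n => by
      rw [PowerSeries.coeff_mk]; exact natDegree_henselSeq_fst_le g₀ h₀ b F hg n
  obtain ⟨h, hhS, -⟩ := exists_swapPowerSeries_eq (PowerSeries.mk fun n => (S n).2)
    (N := f.natDegree + h₀.natDegree) fun n => by
      rw [PowerSeries.coeff_mk]
      refine natDegree_henselSeq_snd_le g₀ h₀ b F hg (by omega) (fun n => ?_) n
      exact (natDegree_coeff_swapPowerSeries_le f n).trans (by omega)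
  have hF0 : F 0 = g₀ * h₀ := by
    rw [← hf, ← constantCoeff_swapPowerSeries]
    exact PowerSeries.coeff_zero_eq_constantCoeff_apply _
  refine ⟨g, h, swapPowerSeries_injective ?_, ?_, ?_⟩
  · ext1 n
    rw [map_mul, hgS, hhS, PowerSeries.coeff_mul]
    simpa only [PowerSeries.coeff_mk] using
      (sum_antidiagonal_henselSeq g₀ h₀ b F hg hab hF0 n).symm
  · refine monic_of_natDegree_le_of_coeff_eq_one _ hgdeg (PowerSeries.ext fun n => ?_)
    rw [← coeff_coeff_swapPowerSeries, hgS, PowerSeries.coeff_mk,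
      coeff_henselSeq_fst_natDegree g₀ h₀ b F hg, PowerSeries.coeff_one]
  · rw [← constantCoeff_swapPowerSeries, hgS, ← PowerSeries.coeff_zero_eq_constantCoeff_apply,
      PowerSeries.coeff_mk]
    simp only [S, henselSeq_zero]

end Polynomial

theorem exists_eq_pow_mul_and_not_dvd_of_dvd {α : Type*} [CommMonoidWithZero α] [WfDvdMonoid α]
    {p q : α} (hp : p ≠ 0) (hq : Irreducible q) (hdvd : q ∣ p) :
    ∃ e w, 0 < e ∧ ¬q ∣ w ∧ p = q ^ e * w := by
  obtain ⟨e, w, hw, rfl⟩ := WfDvdMonoid.max_power_factor hp hq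
  refine ⟨e, w, Nat.pos_of_ne_zero ?_, hw, rfl⟩
  rintro rfl
  rw [pow_zero, one_mul] at hdvd
  exact hw hdvd

theorem Irreducible.scaleRoots {R : Type*} [CommRing R] [NoZeroDivisors R] {p : R[X]}
    (hp : Irreducible p) {s : R} (hs : IsUnit s) : Irreducible (p.scaleRoots s) := by
  obtain ⟨u, rfl⟩ := hs
  let e : R[X] ≃* R[X] :=
    { toFun := (·.scaleRoots u)
      invFun := (·.scaleRoots ↑u⁻¹)
      left_inv := fun p => by simp only [← scaleRoots_mul, Units.mul_inv, scaleRoots_one]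
      right_inv := fun p => by simp only [← scaleRoots_mul, Units.inv_mul, scaleRoots_one]
      map_mul' := fun p q => mul_scaleRoots_of_noZeroDivisors p q u }
  exact hp.map e

theorem Polynomial.eq_zero_of_coeff_X_add_C_pow_pred_eq_zero {R : Type*} [CommRing R]
    [NoZeroDivisors R] {c : R} {d : ℕ} (hd : (d : R) ≠ 0)
    (h : ((X + C c) ^ d).coeff (d - 1) = 0) : c = 0 := by
  have hd1 : 1 ≤ d := Nat.one_le_iff_ne_zero.mpr (by rintro rfl; exact hd Nat.cast_zero)
  rw [coeff_X_add_C_pow, Nat.sub_sub_self hd1, pow_one, Nat.choose_symm hd1,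
    Nat.choose_one_right] at h
  exact (mul_eq_zero.mp h).resolve_right hd

section LaurentSeries

variable {F : Type*} [Field F]

theorem LaurentSeries.valuation_coe_lt_one_iff (p : PowerSeries F) :
    Valued.v (p : LaurentSeries F) < 1 ↔ PowerSeries.constantCoeff p = 0 := by
  rw [← LaurentSeries.coe_algebraMap, LaurentSeries.valuation_def,
    IsDedekindDomain.HeightOneSpectrum.valuation_of_algebraMap,
    IsDedekindDomain.HeightOneSpectrum.intValuation_lt_one_iff_dvd, PowerSeries.idealX,
    Ideal.span_singleton_dvd_span_singleton_iff_dvd, PowerSeries.X_dvd_iff]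

namespace Polynomial

theorem natDegree_map_ofPowerSeries (P : (PowerSeries F)[X]) :
    (P.map (HahnSeries.ofPowerSeries ℤ F)).natDegree = P.natDegree :=
  natDegree_map_eq_of_injective (HahnSeries.ofPowerSeries_injective (Γ := ℤ) (R := F)) P

theorem coeff_map_constantCoeff_eq_zero_iff (P : (PowerSeries F)[X]) (j : ℕ) :
    (P.map PowerSeries.constantCoeff).coeff j = 0 ↔
      Valued.v ((P.map (HahnSeries.ofPowerSeries ℤ F)).coeff j) < 1 := by
  rw [coeff_map, coeff_map, LaurentSeries.valuation_coe_lt_one_iff]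

theorem not_irreducible_map_of_map_constantCoeff_eq_mul (P : (PowerSeries F)[X]) {g₀ h₀ : F[X]}
    (hg : g₀.Monic) (hcop : IsCoprime g₀ h₀)
    (hP : P.map PowerSeries.constantCoeff = g₀ * h₀)
    (hpos : 0 < g₀.natDegree) (hlt : g₀.natDegree < P.natDegree) :
    ¬Irreducible (P.map (HahnSeries.ofPowerSeries ℤ F)) := by
  obtain ⟨g, h, rfl, hgm, rfl⟩ := exists_monic_factor_of_map_constantCoeff_eq_mul P hg hcop hP
  rw [hgm.natDegree_map] at hpos hlt
  have hh : h ≠ 0 := by rintro rfl; simp at hlt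
  rw [hgm.natDegree_mul' hh] at hlt
  rw [Polynomial.map_mul]
  intro hirr
  rcases hirr.isUnit_or_isUnit rfl with hu | hu
  · have := natDegree_eq_zero_of_isUnit hu; rw [natDegree_map_ofPowerSeries] at this; omega
  · have := natDegree_eq_zero_of_isUnit hu; rw [natDegree_map_ofPowerSeries] at this; omega

theorem not_irreducible_map_of_coeff_zero_map_constantCoeff (P : (PowerSeries F)[X])
    (hne : P.map PowerSeries.constantCoeff ≠ 0)
    (h0 : (P.map PowerSeries.constantCoeff).coeff 0 = 0)
    (hlt : (P.map PowerSeries.constantCoeff).natDegree < P.natDegree) :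
    ¬Irreducible (P.map (HahnSeries.ofPowerSeries ℤ F)) := by
  obtain ⟨e, w, he, hw, hPw⟩ :=
    exists_eq_pow_mul_and_not_dvd_of_dvd hne irreducible_X (X_dvd_iff.mpr h0)
  have hle : (X ^ e : F[X]).natDegree ≤ (P.map PowerSeries.constantCoeff).natDegree :=
    natDegree_le_of_dvd ⟨w, hPw⟩ hne
  rw [natDegree_X_pow] at hle
  exact not_irreducible_map_of_map_constantCoeff_eq_mul P (monic_X_pow e)
    ((irreducible_X.coprime_iff_not_dvd.mpr hw).pow_left) hPw (by rwa [natDegree_X_pow])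
    (by rw [natDegree_X_pow]; omega)

theorem exists_map_constantCoeff_eq_pow {P : (PowerSeries F)[X]} (hP : P.Monic)
    (hirr : Irreducible (P.map (HahnSeries.ofPowerSeries ℤ F))) :
    ∃ q : F[X], q.Monic ∧ Irreducible q ∧ ∃ e, P.map PowerSeries.constantCoeff = q ^ e := by
  set P₀ := P.map PowerSeries.constantCoeff
  have hdeg : P₀.natDegree = P.natDegree := hP.natDegree_map _
  have hpos : 0 < P.natDegree := by
    simpa only [natDegree_map_ofPowerSeries] using hirr.natDegree_pos
  obtain ⟨q, hqm, hq, hqP⟩ :=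
    P₀.exists_monic_irreducible_factor fun hu => by
      have := natDegree_eq_zero_of_isUnit hu; omega
  obtain ⟨e, w, he, hw, hP₀⟩ :=
    exists_eq_pow_mul_and_not_dvd_of_dvd (hP.map _).ne_zero hq hqP
  have hwm : w.Monic := (hqm.pow e).of_mul_monic_left (hP₀ ▸ hP.map _)
  refine ⟨q, hqm, hq, e, ?_⟩
  by_contra hne
  have hw1 : w ≠ 1 := by rintro rfl; rw [mul_one] at hP₀; exact hne hP₀
  have hdeg' : P₀.natDegree = (q ^ e).natDegree + w.natDegree := by
    rw [hP₀, (hqm.pow e).natDegree_mul hwm]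
  have hqpos : 0 < (q ^ e).natDegree := by
    rw [natDegree_pow]; exact Nat.mul_pos he hq.natDegree_pos
  have hwpos : 0 < w.natDegree := Nat.pos_of_ne_zero (mt hwm.natDegree_eq_zero.mp hw1)
  exact not_irreducible_map_of_map_constantCoeff_eq_mul P (hqm.pow e)
    ((hq.coprime_iff_not_dvd.mpr hw).pow_left) hP₀ hqpos (by omega) hirr

/- Dividing `f` by a coefficient of maximal valuation gives an integral polynomial whose
reduction vanishes at `0` and, as `f` is monic, has smaller degree; Hensel's lemma splits it. -/
theorem Monic.valuation_coeff_le_one {f : (LaurentSeries F)[X]} (hf : f.Monic)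
    (hirr : Irreducible f) (h0 : Valued.v (f.coeff 0) ≤ 1) (j : ℕ) :
    Valued.v (f.coeff j) ≤ 1 := by
  by_contra! hj
  obtain ⟨i, -, hmax⟩ := exists_max_image (range (f.natDegree + 1))
    (fun j => Valued.v (f.coeff j)) ⟨0, mem_range.mpr f.natDegree.succ_pos⟩
  set c := f.coeff i
  have hle : ∀ j, Valued.v (f.coeff j) ≤ Valued.v c := by
    intro j
    by_cases hj : j ≤ f.natDegree
    · exact hmax j (mem_range.mpr (by omega))
    · rw [coeff_eq_zero_of_natDegree_lt (by omega), map_zero]; exact zero_le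
  have hc : 1 < Valued.v c := hj.trans_le (hle j)
  have hc0 : c ≠ 0 := by rintro h; rw [h, map_zero] at hc; exact not_lt_zero hc
  obtain ⟨P, hP⟩ :
      ∃ P : (PowerSeries F)[X], P.map (HahnSeries.ofPowerSeries ℤ F) = C c⁻¹ * f := by
    refine (mem_lifts _).mp ((lifts_iff_coeff_lifts _).mpr fun j => ?_)
    refine (LaurentSeries.val_le_one_iff_eq_coe F _).mp ?_
    rw [coeff_C_mul, map_mul, map_inv₀]
    exact inv_mul_le_one_of_le₀ (hle j) zero_le
  have hsmall : ∀ j, Valued.v (f.coeff j) < Valued.v c →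
      (P.map PowerSeries.constantCoeff).coeff j = 0 := by
    intro j hj
    rw [coeff_map_constantCoeff_eq_zero_iff, hP, coeff_C_mul, map_mul, map_inv₀,
      inv_mul_lt_one₀ (hc.trans_le' zero_le)]
    exact hj
  have hci : (P.map PowerSeries.constantCoeff).coeff i ≠ 0 := by
    rw [ne_eq, coeff_map_constantCoeff_eq_zero_iff, hP, coeff_C_mul, inv_mul_cancel₀ hc0, map_one]
    exact lt_irrefl 1
  have hPdeg : P.natDegree = f.natDegree := by
    rw [← natDegree_map_ofPowerSeries, hP,
      natDegree_C_mul (inv_ne_zero hc0)]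
  have hne : P.map PowerSeries.constantCoeff ≠ 0 := fun h => hci (by rw [h, coeff_zero])
  refine not_irreducible_map_of_coeff_zero_map_constantCoeff P hne (hsmall 0 (h0.trans_lt hc)) ?_
    (hP ▸ (irreducible_isUnit_mul (isUnit_C.mpr (IsUnit.mk0 _ (inv_ne_zero hc0)))).mpr hirr)
  refine lt_of_le_of_ne natDegree_map_le fun h => ?_
  have := hsmall f.natDegree (by rwa [hf.coeff_natDegree, map_one])
  rw [← hPdeg, ← h] at this
  exact hne (leadingCoeff_eq_zero.mp this)

end Polynomial

end LaurentSeries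

namespace LaurentSeries

variable {F : Type*} [Field F] [CharZero F] {d : ℕ}

theorem not_irreducible_of_coeff_zero_eq_one (hd : d.Prime)
    (ih : ∀ g : F[X], g.Monic → Irreducible g → g.natDegree = d → g.coeff (d - 1) = 0 →
      ¬∃ z : F, g.eval 0 = z ^ d)
    {f : (LaurentSeries F)[X]} (hf : f.Monic) (hdeg : f.natDegree = d)
    (hcoeff : f.coeff (d - 1) = 0) (h0 : f.coeff 0 = 1) : ¬Irreducible f := by
  intro hirr
  have hlifts : f ∈ lifts (HahnSeries.ofPowerSeries ℤ F) :=
    (lifts_iff_coeff_lifts _).mpr fun j => (val_le_one_iff_eq_coe F _).mp <|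
      hf.valuation_coeff_le_one hirr (by rw [h0, map_one]) j
  obtain ⟨P, hP, hPdeg, hPm⟩ := lifts_and_natDegree_eq_and_monic hlifts hf
  have hPcoeff (j : ℕ) {c : PowerSeries F} (hc : f.coeff j = c) :
      (P.map PowerSeries.constantCoeff).coeff j = PowerSeries.constantCoeff c := by
    rw [coeff_map, HahnSeries.ofPowerSeries_injective (by rw [← coeff_map, hP, hc] :
      HahnSeries.ofPowerSeries ℤ F (P.coeff j) = HahnSeries.ofPowerSeries ℤ F c)]
  have hP₀0 : (P.map PowerSeries.constantCoeff).coeff 0 = 1 := by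
    rw [hPcoeff 0 (h0.trans (map_one _).symm), map_one]
  have hP₀top : (P.map PowerSeries.constantCoeff).coeff (d - 1) = 0 := by
    rw [hPcoeff (d - 1) (hcoeff.trans (map_zero _).symm), map_zero]
  obtain ⟨q, hqm, hq, e, he⟩ := exists_map_constantCoeff_eq_pow hPm (hP ▸ hirr)
  have hed : e * q.natDegree = d := by
    rw [← natDegree_pow, ← he, hPm.natDegree_map, hPdeg, hdeg]
  rcases hd.eq_one_or_self_of_dvd e ⟨_, hed.symm⟩ with rfl | rfl
  · rw [pow_one] at he
    exact ih q hqm hq (by omega) (he ▸ hP₀top)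
      ⟨1, by rw [← coeff_zero_eq_eval_zero, ← he, hP₀0, one_pow]⟩
  · -- the reduction is `(X + c) ^ d`, and the vanishing `X ^ (d - 1)`-coefficient forces `c = 0`
    have hq1 : q.natDegree = 1 := by
      nth_rw 2 [← mul_one e] at hed; exact Nat.eq_of_mul_eq_mul_left hd.pos hed
    rw [hqm.eq_X_add_C hq1] at he
    have hc := eq_zero_of_coeff_X_add_C_pow_pred_eq_zero (Nat.cast_ne_zero.mpr hd.ne_zero)
      (he ▸ hP₀top)
    rw [he, hc, C_0, add_zero, coeff_X_pow, if_neg hd.ne_zero.symm] at hP₀0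
    exact zero_ne_one hP₀0

theorem not_exists_eval_zero_eq_pow (hd : d.Prime)
    (ih : ∀ g : F[X], g.Monic → Irreducible g → g.natDegree = d → g.coeff (d - 1) = 0 →
      ¬∃ z : F, g.eval 0 = z ^ d)
    {f : (LaurentSeries F)[X]} (hf : f.Monic) (hirr : Irreducible f) (hdeg : f.natDegree = d)
    (hcoeff : f.coeff (d - 1) = 0) :
    ¬∃ y : LaurentSeries F, f.eval 0 = y ^ d := by
  rintro ⟨y, hy⟩
  have hy0 : y ≠ 0 := by
    rintro rfl
    have := degree_eq_one_of_irreducible_of_root hirr (x := 0)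
      (by rw [IsRoot, hy, zero_pow hd.ne_zero])
    rw [degree_eq_natDegree hirr.ne_zero, hdeg] at this
    exact hd.one_lt.ne' (by exact_mod_cast this)
  refine not_irreducible_of_coeff_zero_eq_one hd ih ((monic_scaleRoots_iff y⁻¹).mpr hf)
    ((natDegree_scaleRoots _ _).trans hdeg) (by rw [coeff_scaleRoots, hcoeff, zero_mul]) ?_
    (hirr.scaleRoots (IsUnit.mk0 _ (inv_ne_zero hy0)))
  rw [coeff_scaleRoots, coeff_zero_eq_eval_zero, hy, hdeg, Nat.sub_zero, inv_pow,
    mul_inv_cancel₀ (pow_ne_zero _ hy0)]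

end LaurentSeries

instance IterLaurent.instCharZero (k : Type) [Field k] [CharZero k] (m : ℕ) :
    CharZero (IterLaurent k m) := by
  induction m with
  | zero => exact ‹CharZero k›
  | succ m ih =>
    exact charZero_of_injective_ringHom (HahnSeries.C_injective (Γ := ℤ) (R := IterLaurent k m))

/-- Let `k` be an algebraically closed field of characteristic `0`,
`K = k((t₁))…((t_m))`, `d` a prime number, and `f ∈ K[X]` a monic irreducible polynomial
of degree `d` whose coefficient of `X^{d-1}` vanishes. Then `f(0)` is not a `d`-th power
in `K`. -/
theorem constant_coeff_not_dth_power (k : Type) [Field k] [IsAlgClosed k] [CharZero k]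
    (m : ℕ) (d : ℕ) (hd : d.Prime)
    (f : Polynomial (IterLaurent k m)) (hmonic : f.Monic) (hirr : Irreducible f)
    (hdeg : f.natDegree = d) (hcoeff : f.coeff (d - 1) = 0) :
    ¬ ∃ y : IterLaurent k m, Polynomial.eval 0 f = y ^ d := by
  induction m with
  | zero =>
    -- `IterLaurent k 0` is `k` only after unfolding, so the instances are supplied by hand
    have h : f.natDegree = 1 := natDegree_eq_of_degree_eq_some
      (@IsAlgClosed.degree_eq_one_of_irreducible k ‹_› ‹_› f hirr)
    exact absurd (hdeg ▸ h) hd.one_lt.ne'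
  | succ m ih =>
    exact LaurentSeries.not_exists_eval_zero_eq_pow hd ih hmonic hirr hdeg hcoeff
end
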